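/- Let A be an AM-algebra with unit e and let M be a maximal ideal of A. Then M has codimension one: for every x ∈ A there exists a unique λ ∈ ℝ such that x − λ•e ∈ M. (Equivalently, the quotient A/M is lattice and algebra isomorphic to ℝ.) -/

import Mathlib

/-!
If `|c| ≤ l • e` then `|c x| ≤ l • |x|` and `|x c| ≤ l • |x|`, so every solid subspace of `A` is
automatically a ring ideal. Hence, for `0 ≤ y ∉ M`, maximality forces the order ideal generated by
`M` and `y` to be all of `A`, i.e. `e ≤ m + c • y` for some `m ∈ M`, `c ≥ 0`. Applied to the
disjoint elements `u⁺` and `u⁻` this shows that `M` is prime (`u⁺ ∈ M` or `u⁻ ∈ M`); applied to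
`|v|` it shows that `M` is closed for the order-unit topology (`|v| ≤ m_ε + ε • e` for all `ε > 0`
forces `v ∈ M`). With `λ = inf {t | x ≤ t • e + m, m ∈ M}`, primeness at `t = λ - ε` gives
`|x - λ • e| ≤ m_ε + ε • e`, so `x - λ • e ∈ M`.
-/

/-- A subset of a Banach lattice algebra is an *ideal* if it is a linear subspace,
an order ideal, and a two-sided ring ideal. -/
def IsLatticeAlgebraIdeal {A : Type*} [NormedAddCommGroup A] [Lattice A] [IsOrderedAddMonoid A] [HasSolidNorm A] [NormedSpace ℝ A]
    (mul : A →ₗ[ℝ] A →ₗ[ℝ] A) (I : Set A) : Prop :=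
  (0 : A) ∈ I ∧
  (∀ x ∈ I, ∀ y ∈ I, x + y ∈ I) ∧
  (∀ (r : ℝ), ∀ x ∈ I, r • x ∈ I) ∧
  (∀ x ∈ I, ∀ y : A, |y| ≤ |x| → y ∈ I) ∧
  (∀ x ∈ I, ∀ c : A, mul c x ∈ I ∧ mul x c ∈ I)

section VectorLattice

variable {E : Type*} [Lattice E] [AddCommGroup E]

theorem abs_apply_le_apply_abs [IsOrderedAddMonoid E] {F G : Type*} [Lattice F] [AddCommGroup F]
    [IsOrderedAddMonoid F] [FunLike G E F] [AddMonoidHomClass G E F] (f : G) (hf : ∀ x, 0 ≤ x → 0 ≤ f x) (x : E) :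
    |f x| ≤ f |x| := by
  refine abs_le'.2 ⟨?_, ?_⟩
  · have h := hf (|x| - x) (sub_nonneg.2 (le_abs_self x))
    rwa [map_sub, sub_nonneg] at h
  · have h := hf (|x| + x) (neg_le_iff_add_nonneg.1 (neg_le_abs x))
    rw [map_add] at h
    exact neg_le_iff_add_nonneg.2 h

theorem le_abs_add_abs [IsOrderedAddMonoid E] (a b : E) : a ≤ |a| + |b| :=
  (le_abs_self a).trans (le_add_of_nonneg_right (abs_nonneg b))

variable [Module ℝ E]

theorem smul_le_abs_smul_abs [PosSMulMono ℝ E] (r : ℝ) (w : E) : r • w ≤ |r| • |w| := by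
  rcases le_total 0 r with hr | hr
  · rw [abs_of_nonneg hr]
    exact smul_le_smul_of_nonneg_left (le_abs_self w) hr
  · rw [abs_of_nonpos hr, ← neg_smul_neg]
    exact smul_le_smul_of_nonneg_left (neg_le_abs w) (neg_nonneg.2 hr)

theorem abs_smul_le [PosSMulMono ℝ E] (r : ℝ) (w : E) : |r • w| ≤ |r| • |w| :=
  abs_le'.2 ⟨smul_le_abs_smul_abs r w, by simpa using smul_le_abs_smul_abs (-r) w⟩

theorem smul_inf_smul_of_nonneg [PosSMulMono ℝ E] {c : ℝ} (hc : 0 ≤ c) (a b : E) :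
    c • a ⊓ c • b = c • (a ⊓ b) := by
  rcases hc.eq_or_lt with rfl | hc
  · simp
  refine le_antisymm ?_ (le_inf (smul_le_smul_of_nonneg_left inf_le_left hc.le)
    (smul_le_smul_of_nonneg_left inf_le_right hc.le))
  have hc' : 0 ≤ c⁻¹ := inv_nonneg.2 hc.le
  have h : c⁻¹ • (c • a ⊓ c • b) ≤ a ⊓ b := le_inf
    ((smul_le_smul_of_nonneg_left inf_le_left hc').trans_eq (inv_smul_smul₀ hc.ne' a))
    ((smul_le_smul_of_nonneg_left inf_le_right hc').trans_eq (inv_smul_smul₀ hc.ne' b))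
  calc c • a ⊓ c • b = c • c⁻¹ • (c • a ⊓ c • b) := (smul_inv_smul₀ hc.ne' _).symm
    _ ≤ c • (a ⊓ b) := smul_le_smul_of_nonneg_left h hc.le

theorem abs_apply_apply_le_smul_abs [IsOrderedAddMonoid E] (B : E →ₗ[ℝ] E →ₗ[ℝ] E)
    (hB : ∀ a b, 0 ≤ a → 0 ≤ b → 0 ≤ B a b) {e : E} (hBe : ∀ a, B e a = a)
    {c : E} {l : ℝ} (hc : |c| ≤ l • e) (w : E) : |B c w| ≤ l • |w| :=
  calc |B c w| = |B c⁺ w - B c⁻ w| := by rw [← LinearMap.sub_apply, ← map_sub, posPart_sub_negPart]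
    _ ≤ |B c⁺ w| + |B c⁻ w| := by simpa [sub_eq_add_neg] using abs_add_le (B c⁺ w) (-B c⁻ w)
    _ ≤ B c⁺ |w| + B c⁻ |w| :=
      add_le_add (abs_apply_le_apply_abs (B c⁺) (hB _ · (posPart_nonneg c)) w)
        (abs_apply_le_apply_abs (B c⁻) (hB _ · (negPart_nonneg c)) w)
    _ = B |c| |w| := by rw [← LinearMap.add_apply, ← map_add, posPart_add_negPart]
    _ ≤ B (l • e) |w| := by
      have h := hB _ _ (sub_nonneg.2 hc) (abs_nonneg w)
      rwa [map_sub, LinearMap.sub_apply, sub_nonneg] at h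
    _ = l • |w| := by rw [map_smul, LinearMap.smul_apply, hBe]

end VectorLattice

structure IsStrongUnitalLatticeAlgebra {E : Type*} [Lattice E] [AddCommGroup E] [Module ℝ E]
    (mul : E →ₗ[ℝ] E →ₗ[ℝ] E) (e : E) : Prop where
  mul_nonneg : ∀ a b : E, 0 ≤ a → 0 ≤ b → 0 ≤ mul a b
  one_mul : ∀ a : E, mul e a = a
  mul_one : ∀ a : E, mul a e = a
  abs_le_smul : ∀ x : E, ∃ l : ℝ, 0 ≤ l ∧ |x| ≤ l • e

namespace IsStrongUnitalLatticeAlgebra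

theorem nonneg {E : Type*} [Lattice E] [AddCommGroup E] [IsOrderedAddMonoid E] [Module ℝ E]
    [PosSMulMono ℝ E] {mul : E →ₗ[ℝ] E →ₗ[ℝ] E} {e : E} (hA : IsStrongUnitalLatticeAlgebra mul e) :
    0 ≤ e := by
  obtain ⟨l, hl, h⟩ := hA.abs_le_smul e
  have hl1 : 0 < l + 1 := by linarith
  have h' : 0 ≤ (l + 1) • e := by
    rw [add_smul, one_smul]
    exact neg_le_iff_add_nonneg.1 ((neg_le_abs e).trans h)
  simpa [smul_smul, inv_mul_cancel₀ hl1.ne'] using smul_nonneg (inv_nonneg.2 hl1.le) h'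

theorem isLatticeAlgebraIdeal_of_solid {A : Type*} [NormedAddCommGroup A] [Lattice A]
    [IsOrderedAddMonoid A] [HasSolidNorm A] [NormedSpace ℝ A] [PosSMulMono ℝ A]
    {mul : A →ₗ[ℝ] A →ₗ[ℝ] A} {e : A} (hA : IsStrongUnitalLatticeAlgebra mul e) {I : Set A}
    (zero_mem : (0 : A) ∈ I) (add_mem : ∀ x ∈ I, ∀ y ∈ I, x + y ∈ I)
    (smul_mem : ∀ (r : ℝ), ∀ x ∈ I, r • x ∈ I) (solid : ∀ x ∈ I, ∀ y : A, |y| ≤ |x| → y ∈ I) :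
    IsLatticeAlgebraIdeal mul I := by
  refine ⟨zero_mem, add_mem, smul_mem, solid, fun x hx c => ?_⟩
  obtain ⟨l, hl, hc⟩ := hA.abs_le_smul c
  have hlx : l • |x| ∈ I := smul_mem l _ (solid x hx _ (abs_abs x).le)
  have mem : ∀ w, |w| ≤ l • |x| → w ∈ I := fun w hw =>
    solid _ hlx w (by rwa [abs_of_nonneg (smul_nonneg hl (abs_nonneg x))])
  exact ⟨mem _ (abs_apply_apply_le_smul_abs mul hA.mul_nonneg hA.one_mul hc x),
    mem _ (abs_apply_apply_le_smul_abs mul.flip (fun a b ha hb => hA.mul_nonneg b a hb ha)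
      hA.mul_one hc x)⟩

end IsStrongUnitalLatticeAlgebra

namespace IsLatticeAlgebraIdeal

variable {A : Type*} [NormedAddCommGroup A] [Lattice A] [IsOrderedAddMonoid A] [HasSolidNorm A]
  [NormedSpace ℝ A] {mul : A →ₗ[ℝ] A →ₗ[ℝ] A} {I : Set A} {x y : A}

theorem zero_mem (hI : IsLatticeAlgebraIdeal mul I) : (0 : A) ∈ I := hI.1

theorem add_mem (hI : IsLatticeAlgebraIdeal mul I) (hx : x ∈ I) (hy : y ∈ I) : x + y ∈ I :=
  hI.2.1 x hx y hy

theorem smul_mem (hI : IsLatticeAlgebraIdeal mul I) (r : ℝ) (hx : x ∈ I) : r • x ∈ I :=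
  hI.2.2.1 r x hx

theorem mem_of_abs_le (hI : IsLatticeAlgebraIdeal mul I) (hx : x ∈ I) (h : |y| ≤ |x|) : y ∈ I :=
  hI.2.2.2.1 x hx y h

theorem sub_mem (hI : IsLatticeAlgebraIdeal mul I) (hx : x ∈ I) (hy : y ∈ I) : x - y ∈ I := by
  simpa [sub_eq_add_neg] using hI.add_mem hx (hI.smul_mem (-1) hy)

theorem abs_mem_iff (hI : IsLatticeAlgebraIdeal mul I) : |x| ∈ I ↔ x ∈ I :=
  ⟨fun h => hI.mem_of_abs_le h (abs_abs x).ge, fun h => hI.mem_of_abs_le h (abs_abs x).le⟩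

theorem mem_of_nonneg_of_le (hI : IsLatticeAlgebraIdeal mul I) (hx : x ∈ I) (hy : 0 ≤ y)
    (hyx : y ≤ x) : y ∈ I :=
  hI.mem_of_abs_le hx (by rw [abs_of_nonneg hy]; exact hyx.trans (le_abs_self x))

variable {e : A} {M : Set A}

theorem eq_univ_of_unit_mem (hI : IsLatticeAlgebraIdeal mul I)
    (hA : IsStrongUnitalLatticeAlgebra mul e) (he : e ∈ I) : I = Set.univ :=
  Set.eq_univ_of_forall fun x => by
    obtain ⟨l, hl, hx⟩ := hA.abs_le_smul x
    exact hI.abs_mem_iff.1 (hI.mem_of_nonneg_of_le (hI.smul_mem l he) (abs_nonneg x) hx)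

variable [PosSMulMono ℝ A]

theorem nonpos_of_smul_le_mem (hI : IsLatticeAlgebraIdeal mul I) (hIne : I ≠ Set.univ)
    (hA : IsStrongUnitalLatticeAlgebra mul e) {r : ℝ} (hx : x ∈ I) (hrx : r • e ≤ x) : r ≤ 0 := by
  by_contra! hr
  refine hIne (hI.eq_univ_of_unit_mem hA (hI.mem_of_nonneg_of_le (hI.smul_mem r⁻¹ hx) hA.nonneg ?_))
  calc e = r⁻¹ • r • e := (inv_smul_smul₀ hr.ne' e).symm
    _ ≤ r⁻¹ • x := smul_le_smul_of_nonneg_left hrx (inv_nonneg.2 hr.le)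

theorem exists_unit_le_add_smul (hM : IsLatticeAlgebraIdeal mul M)
    (hMmax : ∀ J : Set A, IsLatticeAlgebraIdeal mul J → J ≠ Set.univ → M ⊆ J → J = M)
    (hA : IsStrongUnitalLatticeAlgebra mul e) (hy : 0 ≤ y) (hyM : y ∉ M) :
    ∃ m ∈ M, ∃ c : ℝ, 0 ≤ c ∧ e ≤ m + c • y := by
  set J := {w : A | ∃ m ∈ M, ∃ c : ℝ, 0 ≤ c ∧ |w| ≤ m + c • y}
  have hJ : IsLatticeAlgebraIdeal mul J := by
    refine hA.isLatticeAlgebraIdeal_of_solid ⟨0, hM.zero_mem, 0, le_rfl, by simp⟩ ?_ ?_ ?_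
    · rintro w₁ ⟨m₁, hm₁, c₁, hc₁, h₁⟩ w₂ ⟨m₂, hm₂, c₂, hc₂, h₂⟩
      refine ⟨m₁ + m₂, hM.add_mem hm₁ hm₂, c₁ + c₂, add_nonneg hc₁ hc₂, ?_⟩
      calc |w₁ + w₂| ≤ |w₁| + |w₂| := abs_add_le w₁ w₂
        _ ≤ (m₁ + c₁ • y) + (m₂ + c₂ • y) := add_le_add h₁ h₂
        _ = m₁ + m₂ + (c₁ + c₂) • y := by rw [add_smul]; abel
    · rintro r w ⟨m, hm, c, hc, h⟩
      refine ⟨|r| • m, hM.smul_mem _ hm, |r| * c, mul_nonneg (abs_nonneg r) hc, ?_⟩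
      calc |r • w| ≤ |r| • |w| := abs_smul_le r w
        _ ≤ |r| • (m + c • y) := smul_le_smul_of_nonneg_left h (abs_nonneg r)
        _ = |r| • m + (|r| * c) • y := by rw [smul_add, smul_smul]
    · rintro w ⟨m, hm, c, hc, h⟩ v hvw
      exact ⟨m, hm, c, hc, hvw.trans h⟩
  have hMJ : M ⊆ J := fun m hm => ⟨|m|, hM.abs_mem_iff.2 hm, 0, le_rfl, by simp⟩
  have hyJ : y ∈ J := ⟨0, hM.zero_mem, 1, zero_le_one, by simp [abs_of_nonneg hy]⟩
  have hJuniv : J = Set.univ := by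
    by_contra hne
    exact hyM (hMmax J hJ hne hMJ ▸ hyJ)
  obtain ⟨m, hm, c, hc, h⟩ : e ∈ J := hJuniv ▸ Set.mem_univ e
  exact ⟨m, hm, c, hc, (le_abs_self e).trans h⟩

theorem posPart_mem_or_negPart_mem (hM : IsLatticeAlgebraIdeal mul M) (hMproper : M ≠ Set.univ)
    (hMmax : ∀ J : Set A, IsLatticeAlgebraIdeal mul J → J ≠ Set.univ → M ⊆ J → J = M)
    (hA : IsStrongUnitalLatticeAlgebra mul e) (u : A) : u⁺ ∈ M ∨ u⁻ ∈ M := by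
  by_contra! h
  obtain ⟨m₁, hm₁, c₁, hc₁, h₁⟩ := hM.exists_unit_le_add_smul hMmax hA (posPart_nonneg u) h.1
  obtain ⟨m₂, hm₂, c₂, hc₂, h₂⟩ := hM.exists_unit_le_add_smul hMmax hA (negPart_nonneg u) h.2
  have he : e ≤ |m₁| + |m₂| := calc
    e ≤ (|m₁| + |m₂| + (c₁ + c₂) • u⁺) ⊓ (|m₁| + |m₂| + (c₁ + c₂) • u⁻) := le_inf
      (h₁.trans (add_le_add (le_abs_add_abs m₁ m₂)
        (smul_le_smul_of_nonneg_right (le_add_of_nonneg_right hc₂) (posPart_nonneg u))))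
      (h₂.trans (add_le_add ((le_abs_add_abs m₂ m₁).trans_eq (add_comm _ _))
        (smul_le_smul_of_nonneg_right (le_add_of_nonneg_left hc₁) (negPart_nonneg u))))
    _ = |m₁| + |m₂| := by
      rw [← add_inf, smul_inf_smul_of_nonneg (add_nonneg hc₁ hc₂), posPart_inf_negPart_eq_zero,
        smul_zero, add_zero]
  have hmM : |m₁| + |m₂| ∈ M := hM.add_mem (hM.abs_mem_iff.2 hm₁) (hM.abs_mem_iff.2 hm₂)
  exact (hM.nonpos_of_smul_le_mem hMproper hA hmM (by rwa [one_smul])).not_gt one_pos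

theorem mem_of_forall_abs_le_add_smul (hM : IsLatticeAlgebraIdeal mul M)
    (hMmax : ∀ J : Set A, IsLatticeAlgebraIdeal mul J → J ≠ Set.univ → M ⊆ J → J = M)
    (hA : IsStrongUnitalLatticeAlgebra mul e) (h : ∀ ε : ℝ, 0 < ε → ∃ m ∈ M, |x| ≤ m + ε • e) :
    x ∈ M := by
  by_contra hx
  obtain ⟨m₀, hm₀, c, hc, he⟩ :=
    hM.exists_unit_le_add_smul hMmax hA (abs_nonneg x) (hM.abs_mem_iff.not.2 hx)
  have hc1 : 0 < c + 1 := by linarith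
  obtain ⟨m, hm, hxm⟩ := h (c + 1)⁻¹ (inv_pos.2 hc1)
  have key : c • |x| + |x| ≤ c • |x| + ((c + 1) • m + m₀) := calc
    c • |x| + |x| = (c + 1) • |x| := by rw [add_smul, one_smul]
    _ ≤ (c + 1) • (m + (c + 1)⁻¹ • e) := smul_le_smul_of_nonneg_left hxm hc1.le
    _ = (c + 1) • m + e := by rw [smul_add, smul_inv_smul₀ hc1.ne']
    _ ≤ (c + 1) • m + (m₀ + c • |x|) := add_le_add_right he _
    _ = c • |x| + ((c + 1) • m + m₀) := by abel
  exact hx (hM.abs_mem_iff.1 (hM.mem_of_nonneg_of_le (hM.add_mem (hM.smul_mem _ hm) hm₀)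
    (abs_nonneg x) (le_of_add_le_add_left key)))

theorem exists_sub_smul_mem (hM : IsLatticeAlgebraIdeal mul M) (hMproper : M ≠ Set.univ)
    (hMmax : ∀ J : Set A, IsLatticeAlgebraIdeal mul J → J ≠ Set.univ → M ⊆ J → J = M)
    (hA : IsStrongUnitalLatticeAlgebra mul e) (x : A) : ∃ l : ℝ, x - l • e ∈ M := by
  set S := {t : ℝ | ∃ m ∈ M, x ≤ t • e + m}
  have lower : ∀ t ∉ S, ∃ m ∈ M, t • e ≤ x + m := fun t ht => by
    rcases hM.posPart_mem_or_negPart_mem hMproper hMmax hA (x - t • e) with h | h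
    · exact absurd ⟨_, h, sub_le_iff_le_add'.1 (le_posPart _)⟩ ht
    · refine ⟨_, h, sub_le_iff_le_add'.1 ?_⟩
      simpa using neg_le_negPart (x - t • e)
  obtain ⟨l₀, -, hx⟩ := hA.abs_le_smul x
  have hSne : S.Nonempty := ⟨l₀, 0, hM.zero_mem, by simpa using (le_abs_self x).trans hx⟩
  have hS : BddBelow S := ⟨-l₀, fun t ⟨m, hm, ht⟩ => by
    have h : (-l₀ - t) • e ≤ m := by
      rw [sub_smul, neg_smul]
      exact sub_le_iff_le_add'.2 ((neg_le.1 ((neg_le_abs x).trans hx)).trans ht)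
    linarith [hM.nonpos_of_smul_le_mem hMproper hA hm h]⟩
  set l := sInf S
  refine ⟨l, hM.mem_of_forall_abs_le_add_smul hMmax hA fun ε hε => ?_⟩
  obtain ⟨t, ⟨m₁, hm₁, hxt⟩, ht⟩ := exists_lt_of_csInf_lt hSne (lt_add_of_pos_right l hε)
  obtain ⟨m₂, hm₂, htx⟩ := lower (l - ε) fun h => (csInf_le hS h).not_gt (sub_lt_self l hε)
  refine ⟨|m₁| + |m₂|, hM.add_mem (hM.abs_mem_iff.2 hm₁) (hM.abs_mem_iff.2 hm₂), abs_le'.2 ⟨?_, ?_⟩⟩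
  · calc x - l • e ≤ t • e + m₁ - l • e := sub_le_sub_right hxt _
      _ = m₁ + (t - l) • e := by rw [sub_smul]; abel
      _ ≤ |m₁| + |m₂| + ε • e := add_le_add (le_abs_add_abs m₁ m₂)
        (smul_le_smul_of_nonneg_right (by linarith) hA.nonneg)
  · calc -(x - l • e) = (l - ε) • e - x + ε • e := by rw [sub_smul]; abel
      _ ≤ m₂ + ε • e := add_le_add_left (sub_le_iff_le_add'.2 htx) _
      _ ≤ |m₁| + |m₂| + ε • e :=
        add_le_add_left ((le_abs_add_abs m₂ m₁).trans_eq (add_comm _ _)) _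

theorem eq_of_sub_smul_mem (hM : IsLatticeAlgebraIdeal mul M) (hMproper : M ≠ Set.univ)
    (hA : IsStrongUnitalLatticeAlgebra mul e) {l l' : ℝ} (hl : x - l • e ∈ M)
    (hl' : x - l' • e ∈ M) : l' = l := by
  have key : ∀ {a b : ℝ}, x - a • e ∈ M → x - b • e ∈ M → a - b ≤ 0 := fun ha hb =>
    hM.nonpos_of_smul_le_mem hMproper hA (hM.sub_mem hb ha) (le_of_eq (by rw [sub_smul]; abel))
  linarith [key hl hl', key hl' hl]

end IsLatticeAlgebraIdeal

theorem am_algebra_maximal_ideal_codimension_one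
    {A : Type*} [NormedAddCommGroup A] [Lattice A] [IsOrderedAddMonoid A] [HasSolidNorm A] [NormedSpace ℝ A]
    [PosSMulStrictMono ℝ A]
    (mul : A →ₗ[ℝ] A →ₗ[ℝ] A)
    (mul_nonneg : ∀ a b : A, 0 ≤ a → 0 ≤ b → 0 ≤ mul a b)
    (e : A) (one_mul : ∀ a : A, mul e a = a) (mul_one : ∀ a : A, mul a e = a)
    -- AM-space with unit `e`
    (order_unit : ∀ x : A, ∃ l : ℝ, 0 ≤ l ∧ |x| ≤ l • e)
    -- `M` is a maximal ideal
    (M : Set A) (hM : IsLatticeAlgebraIdeal mul M) (hMproper : M ≠ Set.univ)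
    (hMmax : ∀ J : Set A, IsLatticeAlgebraIdeal mul J → J ≠ Set.univ → M ⊆ J → J = M) :
    ∀ x : A, ∃! l : ℝ, x - l • e ∈ M := by
  have hA : IsStrongUnitalLatticeAlgebra mul e := ⟨mul_nonneg, one_mul, mul_one, order_unit⟩
  intro x
  obtain ⟨l, hl⟩ := hM.exists_sub_smul_mem hMproper hMmax hA x
  exact ⟨l, hl, fun l' hl' => hM.eq_of_sub_smul_mem hMproper hA hl hl'⟩
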